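/- Let x_1,…,x_n be positive integers with x_1+⋯+x_n = 2N. The partition constraint graph P(x) has a legal configuration if and only if there exists a subset S ⊆ {1,…,n} with ∑_{i∈S} x_i = N. -/

import Mathlib

/-!
STATEMENT 0: Let x_1,…,x_n be positive integers with x_1+⋯+x_n = 2N.
The partition constraint graph P(x) has a legal configuration if and only if
there exists a subset S ⊆ {1,…,n} with ∑_{i∈S} x_i = N.
-/

/-- A configuration of a constraint graph assigns to each edge one of its
two endpoints (its head). -/
def IsConf {V : Type} (G : SimpleGraph V) (C : Sym2 V → V) : Prop :=
  ∀ e ∈ G.edgeSet, C e ∈ e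

/-- A configuration is legal if every vertex receives inflow (total weight of
edges whose head is that vertex) at least its minimum inflow. -/
def Legal {V : Type} [Fintype V] [DecidableEq V] (G : SimpleGraph V)
    [DecidableRel G.Adj] (w : Sym2 V → ℕ) (μ : V → ℕ) (C : Sym2 V → V) : Prop :=
  ∀ v : V, μ v ≤ ∑ e ∈ G.edgeFinset, if C e = v then w e else 0

/-- Vertices of the partition constraint graph: `U`, `W` and `v i` for `i < n`. -/
inductive PVert (n : ℕ) : Type
  | U : PVert n
  | W : PVert n
  | v : Fin n → PVert n
deriving DecidableEq, Fintype

/-- Adjacency of the partition constraint graph: `U` and `W` are each joined to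
every `v i`. -/
def padjB {n : ℕ} : PVert n → PVert n → Bool
  | .U, .v _ => true
  | .v _, .U => true
  | .W, .v _ => true
  | .v _, .W => true
  | _, _ => false

/-- The underlying graph of the partition constraint graph `P(x)`. -/
def PGraph (n : ℕ) : SimpleGraph (PVert n) where
  Adj a b := padjB a b
  symm := ⟨by intro a b h; cases a <;> cases b <;> simp_all [padjB]⟩
  loopless := ⟨by intro a; cases a <;> simp [padjB]⟩

instance (n : ℕ) : DecidableRel (PGraph n).Adj :=
  fun a b => inferInstanceAs (Decidable (padjB a b = true))

/-- Edge weights of `P(x)` as a symmetric pair function: the edges `{U, v i}`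
and `{W, v i}` both have weight `x i`. -/
def wPairP {n : ℕ} (x : Fin n → ℕ) : PVert n → PVert n → ℕ
  | .U, .v i => x i
  | .v i, .U => x i
  | .W, .v i => x i
  | .v i, .W => x i
  | _, _ => 0

/-- Edge weights of `P(x)`. -/
def wP {n : ℕ} (x : Fin n → ℕ) : Sym2 (PVert n) → ℕ :=
  Sym2.lift ⟨wPairP x, by intro a b; cases a <;> cases b <;> rfl⟩

/-- Minimum inflows of `P(x)`: `μ(U) = μ(W) = N` and `μ(v i) = x i`. -/
def μP {n : ℕ} (x : Fin n → ℕ) (N : ℕ) : PVert n → ℕ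
  | .U => N
  | .W => N
  | .v i => x i

/-!
Summed over all vertices, the inflows of any orientation add up to the total edge weight, which
for `P(x)` is `4N`, the same as the total demand `N + N + ∑ x_i`. So in a legal configuration
every demand is met exactly, and the edges `{U, v_i}` oriented towards `U` pick out a subset of
sum `N`. Conversely, a subset `S` of sum `N` gives the configuration orienting both edges at `v_i`
towards `U` for `i ∈ S` and towards `W` otherwise.
-/

open Finset

section ConstraintGraph

variable {V : Type} [Fintype V] [DecidableEq V] (G : SimpleGraph V) [DecidableRel G.Adj]
  (w : Sym2 V → ℕ)

def inflow (C : Sym2 V → V) (v : V) : ℕ :=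
  ∑ e ∈ G.edgeFinset, if C e = v then w e else 0

theorem sum_inflow (C : Sym2 V → V) : ∑ v, inflow G w C v = ∑ e ∈ G.edgeFinset, w e := by
  simp only [inflow]
  rw [sum_comm]
  simp

variable {G w}

theorem Legal.inflow_eq {μ : V → ℕ} {C : Sym2 V → V} (hC : Legal G w μ C)
    (hμ : ∑ v, μ v = ∑ e ∈ G.edgeFinset, w e) (v : V) : inflow G w C v = μ v :=
  ((sum_eq_sum_iff_of_le fun v _ => hC v).1 (hμ.trans (sum_inflow G w C).symm)
    v (mem_univ v)).symm

end ConstraintGraph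

namespace PVert

variable {n : ℕ}

theorem univ_eq : (univ : Finset (PVert n)) =
    insert U (insert W (univ.map ⟨v, fun _ _ => v.inj⟩)) := by
  ext u
  cases u <;> simp
  exact ⟨_, rfl⟩

end PVert

open PVert

section PartitionGraph

variable {n : ℕ}

theorem edgeFinset_PGraph : (PGraph n).edgeFinset =
    univ.image (fun i => s(U, v i)) ∪ univ.image (fun i => s(W, v i)) := by
  ext e
  induction e with
  | _ a b =>
    rw [SimpleGraph.mem_edgeFinset]
    cases a <;> cases b <;> simp [PGraph, padjB]

theorem sum_edgeFinset_PGraph (f : Sym2 (PVert n) → ℕ) :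
    ∑ e ∈ (PGraph n).edgeFinset, f e = ∑ i, f s(U, v i) + ∑ i, f s(W, v i) := by
  rw [edgeFinset_PGraph, sum_union, sum_image, sum_image]
  · intro i _ j _ h; simpa using h
  · intro i _ j _ h; simpa using h
  · simp [disjoint_left]

theorem sum_wP (x : Fin n → ℕ) : ∑ e ∈ (PGraph n).edgeFinset, wP x e = 2 * ∑ i, x i :=
  (sum_edgeFinset_PGraph _).trans (two_mul _).symm

theorem sum_μP (x : Fin n → ℕ) (N : ℕ) : ∑ u, μP x N u = 2 * N + ∑ i, x i := by
  rw [univ_eq, sum_insert (by simp), sum_insert (by simp), sum_map]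
  change N + (N + ∑ i, x i) = _
  ring

theorem inflow_PGraph (x : Fin n → ℕ) (C : Sym2 (PVert n) → PVert n) (u : PVert n) :
    inflow (PGraph n) (wP x) C u =
      ∑ i, (if C s(U, v i) = u then x i else 0) + ∑ i, (if C s(W, v i) = u then x i else 0) :=
  sum_edgeFinset_PGraph _

theorem IsConf.inflow_PGraph_U {x : Fin n → ℕ} {C : Sym2 (PVert n) → PVert n}
    (hC : IsConf (PGraph n) C) :
    inflow (PGraph n) (wP x) C U = ∑ i ∈ univ.filter (fun i => C s(U, v i) = U), x i := by
  have hW : ∀ i, C s(W, v i) ≠ U := fun i h => by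
    simpa [h] using hC s(W, v i) (by simp [PGraph, padjB])
  simp [inflow_PGraph, hW, sum_filter]

def subsetHeadPair (S : Finset (Fin n)) : PVert n → PVert n → PVert n
  | .U, .v i | .v i, .U => if i ∈ S then U else v i
  | .W, .v i | .v i, .W => if i ∈ S then v i else W
  | _, _ => U

def subsetConf (S : Finset (Fin n)) : Sym2 (PVert n) → PVert n :=
  Sym2.lift ⟨subsetHeadPair S, by intro a b; cases a <;> cases b <;> rfl⟩

theorem isConf_subsetConf (S : Finset (Fin n)) : IsConf (PGraph n) (subsetConf S) := by
  intro e he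
  induction e with
  | _ a b =>
    cases a <;> cases b <;> simp [PGraph, padjB] at he <;>
      simp only [subsetConf, Sym2.lift_mk, subsetHeadPair] <;> split_ifs <;> simp

theorem legal_subsetConf {x : Fin n → ℕ} {N : ℕ} (hsum : ∑ i, x i = 2 * N)
    {S : Finset (Fin n)} (hS : ∑ i ∈ S, x i = N) :
    Legal (PGraph n) (wP x) (μP x N) (subsetConf S) := by
  have hSc : ∑ i ∈ univ.filter (· ∉ S), x i = N := by
    have := sum_filter_add_sum_filter_not univ (· ∈ S) x
    rw [filter_mem_eq_inter, univ_inter] at this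
    omega
  intro u
  change μP x N u ≤ inflow _ _ _ _
  rw [inflow_PGraph]
  cases u with
  | U => simp [subsetConf, subsetHeadPair, μP, ite_eq_iff, hS]
  | W => simp [subsetConf, subsetHeadPair, μP, ite_eq_iff, sum_ite, hSc]
  | v j =>
    rw [sum_eq_single j, sum_eq_single j] <;> by_cases hj : j ∈ S <;>
      simp +contextual [subsetConf, subsetHeadPair, μP, ite_eq_iff, hj]

theorem exists_sum_eq_of_legal {x : Fin n → ℕ} {N : ℕ} (hsum : ∑ i, x i = 2 * N)
    {C : Sym2 (PVert n) → PVert n} (hC : IsConf (PGraph n) C)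
    (hL : Legal (PGraph n) (wP x) (μP x N) C) : ∃ S : Finset (Fin n), ∑ i ∈ S, x i = N :=
  ⟨_, hC.inflow_PGraph_U.symm.trans (hL.inflow_eq (by rw [sum_μP, sum_wP, hsum]; ring) U)⟩

end PartitionGraph

theorem stmt0_general (n N : ℕ) (x : Fin n → ℕ)
    (hsum : ∑ i, x i = 2 * N) :
    (∃ C : Sym2 (PVert n) → PVert n,
        IsConf (PGraph n) C ∧ Legal (PGraph n) (wP x) (μP x N) C) ↔
      ∃ S : Finset (Fin n), ∑ i ∈ S, x i = N :=
  ⟨fun ⟨_, hC, hL⟩ => exists_sum_eq_of_legal hsum hC hL,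
    fun ⟨S, hS⟩ => ⟨subsetConf S, isConf_subsetConf S, legal_subsetConf hsum hS⟩⟩

theorem stmt0 (n N : ℕ) (x : Fin n → ℕ) (hpos : ∀ i, 0 < x i)
    (hsum : ∑ i, x i = 2 * N) :
    (∃ C : Sym2 (PVert n) → PVert n,
        IsConf (PGraph n) C ∧ Legal (PGraph n) (wP x) (μP x N) C) ↔
      ∃ S : Finset (Fin n), ∑ i ∈ S, x i = N :=
  stmt0_general n N x hsum
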